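/- arXiv:0902.2104 — 3 statements merged into one kernel-verified Lean document; each statement's English description precedes it below -/
import Mathlib

section
/- For every coalition A with elements a_1, ..., a_k and every formula φ, the formula C_A φ ↔ (D_{{a_1}}(φ ∧ C_A φ) ∧ ... ∧ D_{{a_k}}(φ ∧ C_A φ)) is valid in every TEM and in every pseudo-TEM, i.e., true at every point. -/
namespace CMATEL

/-- A coalition is a nonempty set of agents. -/
def Coalition (Agt : Type) : Type := {A : Set Agt // A.Nonempty}

/-- The singleton coalition `{a}`. -/
def single {Agt : Type} (a : Agt) : Coalition Agt := ⟨{a}, Set.singleton_nonempty a⟩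

/-- Formulas of the language L. -/
inductive Formula (Agt AP : Type) : Type where
  | atom : AP → Formula Agt AP
  | neg  : Formula Agt AP → Formula Agt AP
  | and  : Formula Agt AP → Formula Agt AP → Formula Agt AP
  | next : Formula Agt AP → Formula Agt AP
  | untl : Formula Agt AP → Formula Agt AP → Formula Agt AP
  | dk   : Coalition Agt → Formula Agt AP → Formula Agt AP
  | ck   : Coalition Agt → Formula Agt AP → Formula Agt AP

variable {Agt AP : Type}

def Formula.imp (φ ψ : Formula Agt AP) : Formula Agt AP :=
  Formula.neg (Formula.and φ (Formula.neg ψ))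
def Formula.or (φ ψ : Formula Agt AP) : Formula Agt AP :=
  Formula.neg (Formula.and (Formula.neg φ) (Formula.neg ψ))
def Formula.iff (φ ψ : Formula Agt AP) : Formula Agt AP :=
  Formula.and (φ.imp ψ) (ψ.imp φ)

/-- The set of subformulas of a formula. -/
def Formula.subf : Formula Agt AP → Set (Formula Agt AP)
  | .atom p   => {Formula.atom p}
  | .neg φ    => insert (Formula.neg φ) φ.subf
  | .and φ ψ  => insert (Formula.and φ ψ) (φ.subf ∪ ψ.subf)
  | .next φ   => insert (Formula.next φ) φ.subf
  | .untl φ ψ => insert (Formula.untl φ ψ) (φ.subf ∪ ψ.subf)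
  | .dk A φ   => insert (Formula.dk A φ) φ.subf
  | .ck A φ   => insert (Formula.ck A φ) φ.subf

/-- A temporal-epistemic system (TES): a nonempty set of states, a nonempty set
of runs, and, for every coalition `A`, relations `R^D_A` and `R^C_A` on points,
where `R^C_A` is the reflexive transitive closure of the union of `R^D_{A'}`
over coalitions `A' ⊆ A`. -/
structure TES (Agt : Type) where
  State : Type
  stateNE : Nonempty State
  runs : Set (ℕ → State)
  runsNE : runs.Nonempty
  RD : Coalition Agt → ↥runs × ℕ → ↥runs × ℕ → Prop
  RC : Coalition Agt → ↥runs × ℕ → ↥runs × ℕ → Prop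
  hRC : ∀ A : Coalition Agt, RC A =
    Relation.ReflTransGen (fun x y => ∃ A' : Coalition Agt, A'.1 ⊆ A.1 ∧ RD A' x y)

abbrev TES.Point (G : TES Agt) : Type := ↥G.runs × ℕ

/-- Synchrony: epistemically related points have the same time component. -/
def TES.Synchronous (G : TES Agt) : Prop :=
  ∀ (A : Coalition Agt) (x y : G.Point), G.RD A x y → x.2 = y.2

/-- A TEF: each `R^D_A` is an equivalence, and `R^D_A = ⋂_{a ∈ A} R^D_{{a}}`. -/
def IsTEF (G : TES Agt) : Prop :=
  (∀ A : Coalition Agt, Equivalence (G.RD A)) ∧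
  (∀ (A : Coalition Agt) (x y : G.Point), G.RD A x y ↔ ∀ a ∈ A.1, G.RD (single a) x y)

/-- A pseudo-TEF: each `R^D_A` is an equivalence, and `R^D_A ⊆ R^D_B` for `B ⊆ A`. -/
def IsPseudoTEF (G : TES Agt) : Prop :=
  (∀ A : Coalition Agt, Equivalence (G.RD A)) ∧
  (∀ (A B : Coalition Agt), B.1 ⊆ A.1 → ∀ x y : G.Point, G.RD A x y → G.RD B x y)

/-- Satisfaction at points `R × ℕ`, given the epistemic relations and a labeling. -/
def Sat {R : Type} (RD RC : Coalition Agt → R × ℕ → R × ℕ → Prop)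
    (lab : R × ℕ → Set AP) : R × ℕ → Formula Agt AP → Prop
  | x, .atom p => p ∈ lab x
  | x, .neg φ => ¬ Sat RD RC lab x φ
  | x, .and φ ψ => Sat RD RC lab x φ ∧ Sat RD RC lab x ψ
  | x, .next φ => Sat RD RC lab (x.1, x.2 + 1) φ
  | x, .untl φ ψ => ∃ i, x.2 ≤ i ∧ Sat RD RC lab (x.1, i) ψ ∧
      ∀ j, x.2 ≤ j → j < i → Sat RD RC lab (x.1, j) φ
  | x, .dk A φ => ∀ y, RD A x y → Sat RD RC lab y φ
  | x, .ck A φ => ∀ y, RC A x y → Sat RD RC lab y φ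

/-- A temporal-epistemic model: a TEF together with a labeling of points. -/
structure TEM (Agt AP : Type) where
  G : TES Agt
  lab : G.Point → Set AP
  isTEF : IsTEF G

def TEM.sat (M : TEM Agt AP) : M.G.Point → Formula Agt AP → Prop :=
  Sat M.G.RD M.G.RC M.lab

/-- A pseudo temporal-epistemic model: a pseudo-TEF together with a labeling. -/
structure PseudoTEM (Agt AP : Type) where
  G : TES Agt
  lab : G.Point → Set AP
  isPTEF : IsPseudoTEF G

def PseudoTEM.sat (M : PseudoTEM Agt AP) : M.G.Point → Formula Agt AP → Prop :=
  Sat M.G.RD M.G.RC M.lab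

/-- `A`-reachability: the reflexive transitive closure of single-agent steps
`R^D_{{a}}`, `a ∈ A`. -/
def AReach (G : TES Agt) (A : Coalition Agt) : G.Point → G.Point → Prop :=
  Relation.ReflTransGen (fun x y => ∃ a ∈ A.1, G.RD (single a) x y)

/-- Fully expanded sets of formulas. -/
def FullyExpanded (Δ : Set (Formula Agt AP)) : Prop :=
  (∀ φ : Formula Agt AP, Formula.neg (Formula.neg φ) ∈ Δ → φ ∈ Δ) ∧
  (∀ φ ψ : Formula Agt AP, Formula.and φ ψ ∈ Δ → φ ∈ Δ ∧ ψ ∈ Δ) ∧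
  (∀ φ ψ : Formula Agt AP, Formula.neg (Formula.and φ ψ) ∈ Δ →
      Formula.neg φ ∈ Δ ∨ Formula.neg ψ ∈ Δ) ∧
  (∀ φ : Formula Agt AP, Formula.neg (Formula.next φ) ∈ Δ →
      Formula.next (Formula.neg φ) ∈ Δ) ∧
  (∀ φ ψ : Formula Agt AP, Formula.untl φ ψ ∈ Δ →
      ψ ∈ Δ ∨ (φ ∈ Δ ∧ Formula.next (Formula.untl φ ψ) ∈ Δ)) ∧
  (∀ φ ψ : Formula Agt AP, Formula.neg (Formula.untl φ ψ) ∈ Δ →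
      (Formula.neg ψ ∈ Δ ∧ Formula.neg φ ∈ Δ) ∨
      (Formula.neg ψ ∈ Δ ∧ Formula.neg (Formula.next (Formula.untl φ ψ)) ∈ Δ)) ∧
  (∀ (A A' : Coalition Agt) (φ : Formula Agt AP), Formula.dk A φ ∈ Δ →
      A.1 ⊆ A'.1 → Formula.dk A' φ ∈ Δ) ∧
  (∀ (A : Coalition Agt) (φ : Formula Agt AP), Formula.dk A φ ∈ Δ → φ ∈ Δ) ∧
  (∀ (A : Coalition Agt) (φ : Formula Agt AP), Formula.ck A φ ∈ Δ →
      ∀ a ∈ A.1, Formula.dk (single a) (Formula.and φ (Formula.ck A φ)) ∈ Δ) ∧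
  (∀ (A : Coalition Agt) (φ : Formula Agt AP), Formula.neg (Formula.ck A φ) ∈ Δ →
      ∃ a ∈ A.1, Formula.neg (Formula.dk (single a) (Formula.and φ (Formula.ck A φ))) ∈ Δ) ∧
  (∀ ψ ∈ Δ, ∀ (A : Coalition Agt) (φ : Formula Agt AP),
      Formula.dk A φ ∈ ψ.subf → Formula.dk A φ ∈ Δ ∨ Formula.neg (Formula.dk A φ) ∈ Δ)

/-- Hintikka-structure conditions (H1)–(H7) for a labeling `H` on a TES. -/
def IsHintikka (G : TES Agt) (H : G.Point → Set (Formula Agt AP)) : Prop :=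
  (∀ (x : G.Point) (φ : Formula Agt AP), Formula.neg φ ∈ H x → φ ∉ H x) ∧
  (∀ x : G.Point, FullyExpanded (H x)) ∧
  (∀ (r : ↥G.runs) (n : ℕ) (φ : Formula Agt AP),
      Formula.next φ ∈ H (r, n) → φ ∈ H (r, n + 1)) ∧
  (∀ (r : ↥G.runs) (n : ℕ) (φ ψ : Formula Agt AP), Formula.untl φ ψ ∈ H (r, n) →
      ∃ i, n ≤ i ∧ ψ ∈ H (r, i) ∧ ∀ j, n ≤ j → j < i → φ ∈ H (r, j)) ∧
  (∀ (x : G.Point) (A : Coalition Agt) (φ : Formula Agt AP),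
      Formula.neg (Formula.dk A φ) ∈ H x →
      ∃ y : G.Point, G.RD A x y ∧ Formula.neg φ ∈ H y) ∧
  (∀ (x y : G.Point) (A : Coalition Agt), G.RD A x y →
      ∀ (A' : Coalition Agt), A'.1 ⊆ A.1 → ∀ φ : Formula Agt AP,
        (Formula.dk A' φ ∈ H x ↔ Formula.dk A' φ ∈ H y)) ∧
  (∀ (x : G.Point) (A : Coalition Agt) (φ : Formula Agt AP),
      Formula.neg (Formula.ck A φ) ∈ H x →
      ∃ y : G.Point, G.RC A x y ∧ Formula.neg φ ∈ H y)

/-- A temporal-epistemic Hintikka structure. -/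
structure TEHS (Agt AP : Type) where
  G : TES Agt
  H : G.Point → Set (Formula Agt AP)
  isH : IsHintikka G H

def TEHS.Synchronous (Hs : TEHS Agt AP) : Prop := Hs.G.Synchronous

/-- Derived relation `R'^D_A`: the reflexive, symmetric and transitive closure of
the union of `R^D_B` over coalitions `B ⊇ A`. -/
def derivedRD (G : TES Agt) (A : Coalition Agt) : G.Point → G.Point → Prop :=
  Relation.EqvGen (fun x y => ∃ B : Coalition Agt, A.1 ⊆ B.1 ∧ G.RD B x y)

/-- Derived relation `R'^C_A`: the transitive closure of the union of
`R'^D_{{a}}` over `a ∈ A`. -/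
def derivedRC (G : TES Agt) (A : Coalition Agt) : G.Point → G.Point → Prop :=
  Relation.TransGen (fun x y => ∃ a ∈ A.1, derivedRD G (single a) x y)

/-- Derived labeling `L(r,n) = H(r,n) ∩ AP`. -/
def derivedLab (Hs : TEHS Agt AP) : Hs.G.Point → Set AP :=
  fun x => {p | Formula.atom p ∈ Hs.H x}

/-- Patently inconsistent set: contains a formula together with its negation. -/
def PatentlyInconsistent (Δ : Set (Formula Agt AP)) : Prop :=
  ∃ φ : Formula Agt AP, φ ∈ Δ ∧ Formula.neg φ ∈ Δ

/-- Minimal fully expanded extension. -/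
def MinimalFEE (Γ Δ : Set (Formula Agt AP)) : Prop :=
  FullyExpanded Δ ∧ Γ ⊆ Δ ∧
  ¬ ∃ Δ' : Set (Formula Agt AP), FullyExpanded Δ' ∧ Γ ⊆ Δ' ∧ Δ' ⊂ Δ

/-- A maximal path from `x` to `y`: consecutive points are related by `R^D_{A_i}`
and by no `R^D_B` for a strictly larger coalition `B`. -/
def IsMaximalPath (G : TES Agt) (m : ℕ) (pts : ℕ → G.Point) (cs : ℕ → Coalition Agt)
    (x y : G.Point) : Prop :=
  pts 0 = x ∧ pts m = y ∧ ∀ i < m,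
    G.RD (cs i) (pts i) (pts (i + 1)) ∧
    ∀ B : Coalition Agt, (cs i).1 ⊂ B.1 → ¬ G.RD B (pts i) (pts (i + 1))

/-- A maximal path equals its reduction iff no two consecutive points lie on the
same run and no two consecutive coalition labels coincide. -/
def IsReducedPath (G : TES Agt) (m : ℕ) (pts : ℕ → G.Point) (cs : ℕ → Coalition Agt) : Prop :=
  (∀ i < m, (pts i).1 ≠ (pts (i + 1)).1) ∧ (∀ i, i + 1 < m → cs i ≠ cs (i + 1))

/-- Forest-likeness: between any two points there is at most one reduced maximal path. -/
def ForestLike (G : TES Agt) : Prop :=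
  ∀ (x y : G.Point) (m₁ : ℕ) (pts₁ : ℕ → G.Point) (cs₁ : ℕ → Coalition Agt)
    (m₂ : ℕ) (pts₂ : ℕ → G.Point) (cs₂ : ℕ → Coalition Agt),
    IsMaximalPath G m₁ pts₁ cs₁ x y → IsReducedPath G m₁ pts₁ cs₁ →
    IsMaximalPath G m₂ pts₂ cs₂ x y → IsReducedPath G m₂ pts₂ cs₂ →
    m₁ = m₂ ∧ (∀ i ≤ m₁, pts₁ i = pts₂ i) ∧ (∀ i < m₁, cs₁ i = cs₂ i)

/-- Finite conjunction of a nonempty list of formulas. -/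
def bigAnd : Formula Agt AP → List (Formula Agt AP) → Formula Agt AP
  | φ, [] => φ
  | φ, ψ :: l => Formula.and φ (bigAnd ψ l)

/-- `D_{{a}}(φ ∧ C_A φ)`. -/
def dform (A : Coalition Agt) (φ : Formula Agt AP) (a : Agt) : Formula Agt AP :=
  Formula.dk (single a) (Formula.and φ (Formula.ck A φ))

section Sat

variable {R : Type} {RD RC : Coalition Agt → R × ℕ → R × ℕ → Prop} {lab : R × ℕ → Set AP}
  {x : R × ℕ}

lemma sat_iff_iff {φ ψ : Formula Agt AP} :
    Sat RD RC lab x (φ.iff ψ) ↔ (Sat RD RC lab x φ ↔ Sat RD RC lab x ψ) := by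
  simp only [Formula.iff, Formula.imp, Sat]
  tauto

lemma sat_bigAnd_map {β : Type} (f : β → Formula Agt AP) (a : β) (l : List β) :
    Sat RD RC lab x (bigAnd (f a) (l.map f)) ↔ ∀ b ∈ a :: l, Sat RD RC lab x (f b) := by
  induction l generalizing a with
  | nil => simp [bigAnd]
  | cons b l ih => simp [bigAnd, Sat, ih]

end Sat

namespace TES

variable (G : TES Agt) {A : Coalition Agt} {x y z : G.Point}

lemma rc_trans (hxy : G.RC A x y) (hyz : G.RC A y z) : G.RC A x z := by
  rw [G.hRC] at *
  exact hxy.trans hyz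

lemma rc_of_rd_single {b : Agt} (hb : b ∈ A.1) (h : G.RD (single b) x y) : G.RC A x y := by
  rw [G.hRC]
  exact .single ⟨single b, Set.singleton_subset_iff.mpr hb, h⟩

end TES

theorem sat_ck_iff_forall_sat_dform (G : TES Agt) (lab : G.Point → Set AP) {A : Coalition Agt}
    {a : Agt} (ha : a ∈ A.1) (hrefl : ∀ x, G.RD (single a) x x) (φ : Formula Agt AP)
    (x : G.Point) :
    Sat G.RD G.RC lab x (.ck A φ) ↔ ∀ b ∈ A.1, Sat G.RD G.RC lab x (dform A φ b) := by
  refine ⟨fun h b hb y hxy => ?_, fun h => (h a ha x (hrefl x)).2⟩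
  have hy := G.rc_of_rd_single hb hxy
  exact ⟨h y hy, fun z hz => h z (G.rc_trans hy hz)⟩

theorem statement_16_general {Agt AP : Type}
    (A : Coalition Agt) (φ : Formula Agt AP)
    (a : Agt) (rest : List Agt)
    (henum : ∀ b : Agt, b ∈ a :: rest ↔ b ∈ A.1) :
    (∀ (M : TEM Agt AP) (x : M.G.Point),
        M.sat x ((Formula.ck A φ).iff (bigAnd (dform A φ a) (rest.map (dform A φ))))) ∧
    (∀ (M : PseudoTEM Agt AP) (x : M.G.Point),
        M.sat x ((Formula.ck A φ).iff (bigAnd (dform A φ a) (rest.map (dform A φ))))) := by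
  have ha : a ∈ A.1 := (henum a).1 List.mem_cons_self
  have valid : ∀ (G : TES Agt), (∀ B, Equivalence (G.RD B)) → ∀ lab x,
      Sat G.RD G.RC lab x ((Formula.ck A φ).iff (bigAnd (dform A φ a) (rest.map (dform A φ)))) := by
    intro G hequiv lab x
    rw [sat_iff_iff, sat_bigAnd_map, sat_ck_iff_forall_sat_dform G lab ha (hequiv _).refl]
    simp only [henum]
  exact ⟨fun M => valid M.G M.isTEF.1 M.lab, fun M => valid M.G M.isPTEF.1 M.lab⟩

/-- For a coalition `A` with (distinct) elements `a₁, …, a_k`, the formula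
`C_A φ ↔ (D_{{a₁}}(φ ∧ C_A φ) ∧ … ∧ D_{{a_k}}(φ ∧ C_A φ))` is valid in every TEM and
every pseudo-TEM. -/
theorem statement_16 {Agt AP : Type} [Fintype Agt] [Nonempty Agt]
    (A : Coalition Agt) (φ : Formula Agt AP)
    (a : Agt) (rest : List Agt) (hnodup : (a :: rest).Nodup)
    (henum : ∀ b : Agt, b ∈ a :: rest ↔ b ∈ A.1) :
    (∀ (M : TEM Agt AP) (x : M.G.Point),
        M.sat x ((Formula.ck A φ).iff (bigAnd (dform A φ a) (rest.map (dform A φ))))) ∧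
    (∀ (M : PseudoTEM Agt AP) (x : M.G.Point),
        M.sat x ((Formula.ck A φ).iff (bigAnd (dform A φ a) (rest.map (dform A φ))))) :=
  statement_16_general A φ a rest henum

end CMATEL
end

section
/- A formula θ of the language L is satisfiable in a TEM if and only if θ is satisfiable in a synchronous TEM. -/
namespace CMATEL

variable {Agt AP : Type}

/-!
Replace every run `r` by all its time shifts `k ↦ (r, d + k)`, `d ∈ ℤ`, and let two new points
be `R^D_A`-related only when they sit at the same global time and their old points are
`R^D_A`-related. Each old point `w` reappears at every global time `k` (on the shift with
`d = w.2 - k`), so the knowledge and common-knowledge modalities range over copies of the same old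
points, while time still advances along the old run.
-/

theorem _root_.Relation.reflTransGen_image_iff {α β : Type*} {R : α → α → Prop}
    {S : β → β → Prop} {f : α → β} (hS : ∀ a y, S (f a) y ↔ ∃ b, R a b ∧ y = f b)
    {a : α} {y : β} :
    Relation.ReflTransGen S (f a) y ↔ ∃ b, Relation.ReflTransGen R a b ∧ y = f b := by
  constructor
  · intro h
    induction h with
    | refl => exact ⟨a, .refl, rfl⟩
    | tail _ hstep ih =>
      obtain ⟨b, hab, rfl⟩ := ih
      obtain ⟨c, hbc, rfl⟩ := (hS b _).1 hstep
      exact ⟨c, hab.tail hbc, rfl⟩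
  · rintro ⟨b, hab, rfl⟩
    exact hab.lift f fun a b h => (hS a _).2 ⟨b, h, rfl⟩

theorem sat_untl_iff {R : Type} {RD RC : Coalition Agt → R × ℕ → R × ℕ → Prop}
    {lab : R × ℕ → Set AP} {x : R × ℕ} {φ ψ : Formula Agt AP} :
    Sat RD RC lab x (.untl φ ψ) ↔
      ∃ j, Sat RD RC lab (x.1, x.2 + j) ψ ∧ ∀ i < j, Sat RD RC lab (x.1, x.2 + i) φ := by
  constructor
  · rintro ⟨i, hxi, hψ, hφ⟩
    refine ⟨i - x.2, by rwa [Nat.add_sub_cancel' hxi], fun j hj => hφ _ (by omega) (by omega)⟩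
  · rintro ⟨j, hψ, hφ⟩
    refine ⟨x.2 + j, by omega, hψ, fun i hxi hij => ?_⟩
    obtain ⟨i, rfl⟩ := Nat.exists_eq_add_of_le hxi
    exact hφ i (by omega)

namespace TES

variable (G : TES Agt)

def shiftRun (r : G.runs) (d : ℤ) : ℕ → G.runs × ℤ := fun k => (r, d + k)

def syncRuns : Set (ℕ → G.runs × ℤ) := Set.range fun p : G.runs × ℤ => G.shiftRun p.1 p.2

abbrev SyncPoint : Type := ↥G.syncRuns × ℕ

def liftPoint (w : G.Point) (k : ℕ) : G.SyncPoint :=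
  (⟨G.shiftRun w.1 (w.2 - k), (w.1, _), rfl⟩, k)

def proj (x : G.SyncPoint) : G.Point := ((x.1.1 x.2).1, (x.1.1 x.2).2.toNat)

/-- Exactly the points whose virtual time `d + k` is nonnegative; on the others `proj` is junk
(`Int.toNat`), so `syncRel` makes them epistemically isolated. -/
def IsLift (x : G.SyncPoint) : Prop := G.liftPoint (G.proj x) x.2 = x

def syncRel (R : G.Point → G.Point → Prop) (x y : G.SyncPoint) : Prop :=
  (G.IsLift x ∧ G.IsLift y ∧ x.2 = y.2 ∧ R (G.proj x) (G.proj y)) ∨ (¬ G.IsLift x ∧ x = y)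

abbrev sync : TES Agt where
  State := G.runs × ℤ
  stateNE := let ⟨r, hr⟩ := G.runsNE; ⟨(⟨r, hr⟩, 0)⟩
  runs := G.syncRuns
  runsNE := let ⟨r, hr⟩ := G.runsNE; ⟨_, (⟨r, hr⟩, 0), rfl⟩
  RD A := G.syncRel (G.RD A)
  RC A := Relation.ReflTransGen fun x y =>
    ∃ A' : Coalition Agt, A'.1 ⊆ A.1 ∧ G.syncRel (G.RD A') x y
  hRC _ := rfl

variable {G}

@[simp]
theorem proj_liftPoint (w : G.Point) (k : ℕ) : G.proj (G.liftPoint w k) = w := by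
  simp [proj, liftPoint, shiftRun]

theorem isLift_liftPoint (w : G.Point) (k : ℕ) : G.IsLift (G.liftPoint w k) := by
  rw [IsLift, proj_liftPoint]
  rfl

theorem liftPoint_add (w : G.Point) (k j : ℕ) :
    ((G.liftPoint w k).1, (G.liftPoint w k).2 + j) = G.liftPoint (w.1, w.2 + j) (k + j) := by
  refine Prod.ext (Subtype.ext (funext fun i => ?_)) rfl
  simp only [liftPoint, shiftRun, Prod.mk.injEq, true_and]
  push_cast
  ring

theorem syncRel_liftPoint_iff {R : G.Point → G.Point → Prop} {w : G.Point} {k : ℕ}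
    {y : G.SyncPoint} : G.syncRel R (G.liftPoint w k) y ↔ ∃ w', R w w' ∧ y = G.liftPoint w' k := by
  constructor
  · rintro (⟨-, hy, hk, hR⟩ | ⟨hx, -⟩)
    · change k = y.2 at hk
      rw [proj_liftPoint] at hR
      exact ⟨G.proj y, hR, by rw [hk, hy]⟩
    · exact absurd (isLift_liftPoint w k) hx
  · rintro ⟨w', hR, rfl⟩
    exact .inl ⟨isLift_liftPoint w k, isLift_liftPoint w' k, rfl, by simpa using hR⟩

theorem reflTransGen_syncRel_liftPoint_iff {ι : Type*} {p : ι → Prop}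
    {R : ι → G.Point → G.Point → Prop} {w : G.Point} {k : ℕ} {y : G.SyncPoint} :
    Relation.ReflTransGen (fun x y => ∃ i, p i ∧ G.syncRel (R i) x y) (G.liftPoint w k) y ↔
      ∃ w', Relation.ReflTransGen (fun u v => ∃ i, p i ∧ R i u v) w w' ∧
        y = G.liftPoint w' k := by
  refine Relation.reflTransGen_image_iff (f := (G.liftPoint · k)) fun w y => ?_
  simp only [syncRel_liftPoint_iff]
  constructor
  · rintro ⟨i, hi, w', hw', rfl⟩
    exact ⟨w', ⟨i, hi, hw'⟩, rfl⟩
  · rintro ⟨w', ⟨i, hi, hw'⟩, rfl⟩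
    exact ⟨i, hi, w', hw', rfl⟩

theorem syncRel_snd_eq {R : G.Point → G.Point → Prop} {x y : G.SyncPoint}
    (h : G.syncRel R x y) : x.2 = y.2 := by
  rcases h with ⟨-, -, hk, -⟩ | ⟨-, rfl⟩
  exacts [hk, rfl]

theorem _root_.Equivalence.syncRel {R : G.Point → G.Point → Prop} (hR : Equivalence R) :
    Equivalence (G.syncRel R) where
  refl x := by
    by_cases hx : G.IsLift x
    exacts [.inl ⟨hx, hx, rfl, hR.refl _⟩, .inr ⟨hx, rfl⟩]
  symm := by
    rintro x y (⟨hx, hy, hk, h⟩ | ⟨hx, rfl⟩)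
    exacts [.inl ⟨hy, hx, hk.symm, hR.symm h⟩, .inr ⟨hx, rfl⟩]
  trans := by
    rintro x y z (⟨hx, hy, hk, h⟩ | ⟨-, rfl⟩) hyz
    · rcases hyz with ⟨-, hz, hk', h'⟩ | ⟨-, rfl⟩
      exacts [.inl ⟨hx, hz, hk.trans hk', hR.trans h h'⟩, .inl ⟨hx, hy, hk, h⟩]
    · exact hyz

theorem syncRel_iff_forall {ι : Type*} {s : Set ι} {R : G.Point → G.Point → Prop}
    {S : ι → G.Point → G.Point → Prop} (hs : s.Nonempty) (hR : ∀ u v, R u v ↔ ∀ i ∈ s, S i u v)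
    {x y : G.SyncPoint} : G.syncRel R x y ↔ ∀ i ∈ s, G.syncRel (S i) x y := by
  obtain ⟨i₀, hi₀⟩ := hs
  constructor
  · rintro (⟨hx, hy, hk, h⟩ | h) i hi
    exacts [.inl ⟨hx, hy, hk, (hR _ _).1 h i hi⟩, .inr h]
  · intro h
    by_cases hx : G.IsLift x
    · have hlift (i) (hi : i ∈ s) := ((h i hi).resolve_right fun h' => h'.1 hx).2
      obtain ⟨hy, hk, -⟩ := hlift i₀ hi₀
      exact .inl ⟨hx, hy, hk, (hR _ _).2 fun i hi => (hlift i hi).2.2⟩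
    · exact .inr ((h i₀ hi₀).resolve_left fun h' => hx h'.1)

theorem sync_synchronous : G.sync.Synchronous := fun _ _ _ => syncRel_snd_eq

theorem sat_sync_liftPoint (lab : G.Point → Set AP) (φ : Formula Agt AP) :
    ∀ (w : G.Point) (k : ℕ),
      Sat G.sync.RD G.sync.RC (lab ∘ G.proj) (G.liftPoint w k) φ ↔ Sat G.RD G.RC lab w φ := by
  induction φ with
  | atom p =>
    intro w k
    show p ∈ lab (G.proj _) ↔ p ∈ lab w
    rw [proj_liftPoint]
  | neg φ ih => intro w k; exact not_congr (ih w k)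
  | and φ ψ ihφ ihψ => intro w k; exact and_congr (ihφ w k) (ihψ w k)
  | next φ ih =>
    intro w k
    exact (congrArg (Sat _ _ _ · φ) (liftPoint_add w k 1)).to_iff.trans (ih _ _)
  | untl φ ψ ihφ ihψ =>
    intro w k
    rw [sat_untl_iff, sat_untl_iff]
    simp only [liftPoint_add, ihφ, ihψ]
  | dk A φ ih =>
    intro w k
    show (∀ y, G.syncRel (G.RD A) _ y → _) ↔ ∀ w', G.RD A w w' → _
    constructor
    · intro h w' hw'
      exact (ih w' k).1 (h _ (syncRel_liftPoint_iff.2 ⟨w', hw', rfl⟩))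
    · intro h y hy
      obtain ⟨w', hw', rfl⟩ := syncRel_liftPoint_iff.1 hy
      exact (ih w' k).2 (h w' hw')
  | ck A φ ih =>
    intro w k
    show (∀ y, Relation.ReflTransGen _ (G.liftPoint w k) y → _) ↔ ∀ w', G.RC A w w' → _
    constructor
    · intro h w' hw'
      rw [G.hRC] at hw'
      exact (ih w' k).1 (h _ (reflTransGen_syncRel_liftPoint_iff.2 ⟨w', hw', rfl⟩))
    · intro h y hy
      obtain ⟨w', hw', rfl⟩ := reflTransGen_syncRel_liftPoint_iff.1 hy
      exact (ih w' k).2 (h w' (G.hRC A ▸ hw'))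

end TES

theorem IsTEF.sync {G : TES Agt} (h : IsTEF G) : IsTEF G.sync :=
  ⟨fun A => (h.1 A).syncRel, fun A _ _ => TES.syncRel_iff_forall A.2 (h.2 A)⟩

def TEM.sync (M : TEM Agt AP) : TEM Agt AP := ⟨M.G.sync, M.lab ∘ M.G.proj, M.isTEF.sync⟩

theorem statement_18_general {Agt AP : Type}
    (θ : Formula Agt AP) :
    (∃ (M : TEM Agt AP) (x : M.G.Point), M.sat x θ) ↔
    (∃ M : TEM Agt AP, M.G.Synchronous ∧ ∃ x : M.G.Point, M.sat x θ) := by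
  constructor
  · rintro ⟨M, w, hw⟩
    exact ⟨M.sync, M.G.sync_synchronous, M.G.liftPoint w 0,
      (M.G.sat_sync_liftPoint M.lab θ w 0).2 hw⟩
  · rintro ⟨M, -, hM⟩
    exact ⟨M, hM⟩

/-- `θ` is satisfiable in a TEM iff `θ` is satisfiable in a synchronous
TEM. -/
theorem statement_18 {Agt AP : Type} [Fintype Agt] [Nonempty Agt]
    (θ : Formula Agt AP) :
    (∃ (M : TEM Agt AP) (x : M.G.Point), M.sat x θ) ↔
    (∃ M : TEM Agt AP, M.G.Synchronous ∧ ∃ x : M.G.Point, M.sat x θ) :=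
  statement_18_general θ

end CMATEL
end

section
/- A formula θ of the language L is satisfiable in a TEM if and only if θ is satisfiable in a TEM whose labeling is state-based, i.e., a TEM in which r(n) = r'(n') implies L(r,n) = L(r',n') for all points (r,n) and (r',n'). -/
namespace CMATEL

variable {Agt AP : Type}

/-
Unfold a model so that its states are its own points: the run through `r` becomes
`n ↦ (r, n)`, and relations and labels are read off the underlying points. Distinct points of
the unfolding never share a state, so its labeling is state-based, and truth is preserved because
the unfolding is in bijection with the model's points by a map that commutes with the time shift.
-/

open Function

theorem _root_.Relation.reflTransGen_onFun_equiv {α β : Type*} (r : β → β → Prop) (e : α ≃ β)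
    (a b : α) : Relation.ReflTransGen (r on e) a b ↔ Relation.ReflTransGen r (e a) (e b) := by
  refine ⟨fun h => Relation.ReflTransGen.lift e (fun _ _ h => h) _ _ h, fun h => ?_⟩
  simpa [onFun] using
    Relation.ReflTransGen.lift e.symm (p := r on e) (fun x y h => by simpa [onFun]) _ _ h

theorem sat_comap {R R' : Type} (f : R → R') (hf : Surjective f)
    (RD RC : Coalition Agt → R' × ℕ → R' × ℕ → Prop) (lab : R' × ℕ → Set AP)
    (φ : Formula Agt AP) (x : R × ℕ) :
    Sat (fun A => RD A on Prod.map f id) (fun A => RC A on Prod.map f id)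
        (lab ∘ Prod.map f id) x φ ↔ Sat RD RC lab (Prod.map f id x) φ := by
  have hpt : Surjective (Prod.map f id : R × ℕ → R' × ℕ) :=
    hf.prodMap surjective_id
  induction φ generalizing x with
  | atom p => rfl
  | neg φ ih => simp only [Sat, ih]
  | and φ ψ ih₁ ih₂ => simp only [Sat, ih₁, ih₂]
  | next φ ih => simp only [Sat, ih]; rfl
  | untl φ ψ ih₁ ih₂ => simp only [Sat, ih₁, ih₂]; rfl
  | dk A φ ih => simp only [Sat, ih, onFun, hpt.forall]
  | ck A φ ih => simp only [Sat, ih, onFun, hpt.forall]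

namespace TES

variable (G : TES Agt)

def pointRun (r : ↥G.runs) : ℕ → G.Point := fun n => (r, n)

theorem pointRun_injective : Injective G.pointRun :=
  fun _ _ h => congrArg Prod.fst (congrFun h 0)

noncomputable def pointRunEquiv : ↥(Set.range G.pointRun) ≃ ↥G.runs :=
  (Equiv.ofInjective _ G.pointRun_injective).symm

theorem pointRunEquiv_apply (s : ↥(Set.range G.pointRun)) (n : ℕ) :
    (s : ℕ → G.Point) n = (G.pointRunEquiv s, n) :=
  (congrFun (Equiv.apply_ofInjective_symm G.pointRun_injective s) n).symm

noncomputable def unfold : TES Agt where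
  State := G.Point
  stateNE := ⟨(⟨_, G.runsNE.some_mem⟩, 0)⟩
  runs := Set.range G.pointRun
  runsNE := ⟨_, Set.mem_range_self ⟨_, G.runsNE.some_mem⟩⟩
  RD A := G.RD A on Prod.map G.pointRunEquiv id
  RC A := G.RC A on Prod.map G.pointRunEquiv id
  hRC A := by
    funext x y
    rw [G.hRC]
    exact propext
      (Relation.reflTransGen_onFun_equiv _ (G.pointRunEquiv.prodCongr (.refl ℕ)) x y).symm

end TES

namespace TEM

def IsStateBased (M : TEM Agt AP) : Prop :=
  ∀ (r r' : ↥M.G.runs) (n n' : ℕ), r.1 n = r'.1 n' → M.lab (r, n) = M.lab (r', n')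

variable (M : TEM Agt AP)

noncomputable def unfold : TEM Agt AP where
  G := M.G.unfold
  lab := M.lab ∘ Prod.map M.G.pointRunEquiv id
  isTEF := ⟨fun A => (M.isTEF.1 A).comap _, fun A _ _ => M.isTEF.2 A _ _⟩

theorem unfold_isStateBased : M.unfold.IsStateBased := fun r r' n n' h =>
  congrArg M.lab <|
    (M.G.pointRunEquiv_apply r n).symm.trans (h.trans (M.G.pointRunEquiv_apply r' n'))

theorem sat_unfold (x : M.unfold.G.Point) (φ : Formula Agt AP) :
    M.unfold.sat x φ ↔ M.sat (Prod.map M.G.pointRunEquiv id x) φ :=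
  sat_comap _ M.G.pointRunEquiv.surjective _ _ _ φ x

end TEM

theorem statement_19_general {Agt AP : Type}
    (θ : Formula Agt AP) :
    (∃ (M : TEM Agt AP) (x : M.G.Point), M.sat x θ) ↔
    (∃ M : TEM Agt AP,
        (∀ (r r' : ↥M.G.runs) (n n' : ℕ), r.1 n = r'.1 n' → M.lab (r, n) = M.lab (r', n')) ∧
        ∃ x : M.G.Point, M.sat x θ) := by
  constructor
  · rintro ⟨M, x, hx⟩
    obtain ⟨x', rfl⟩ := M.G.pointRunEquiv.surjective.prodMap surjective_id x
    exact ⟨M.unfold, M.unfold_isStateBased, x', (M.sat_unfold x' θ).2 hx⟩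
  · rintro ⟨M, -, hM⟩
    exact ⟨M, hM⟩

/-- `θ` is satisfiable in a TEM iff `θ` is satisfiable in a TEM with a
state-based labeling. -/
theorem statement_19 {Agt AP : Type} [Fintype Agt] [Nonempty Agt]
    (θ : Formula Agt AP) :
    (∃ (M : TEM Agt AP) (x : M.G.Point), M.sat x θ) ↔
    (∃ M : TEM Agt AP,
        (∀ (r r' : ↥M.G.runs) (n n' : ℕ), r.1 n = r'.1 n' → M.lab (r, n) = M.lab (r', n')) ∧
        ∃ x : M.G.Point, M.sat x θ) :=
  statement_19_general θ

end CMATEL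
end
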